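/- arXiv:1407.8261 — 4 statements merged into one kernel-verified Lean document; each statement's English description precedes it below -/
import Mathlib

section
/- There is a size-preserving bijection between arch systems with n arches and plane forests with n nodes, which furthermore respects the substructure relation: A is a subsystem of B if and only if the corresponding forest of A is obtained from the forest of B by deleting nodes (reattaching children of deleted nodes to their grandparent, preserving left-to-right order). -/
/-- Plane forests, modelling non-crossing arch systems: `node c r` is an atom
(an arch over the contents `c`) followed by the rest of the forest `r`. -/
inductive PF : Type
  | nil : PF
  | node : PF → PF → PF
  deriving DecidableEq

namespace PF

/-- number of arches (nodes) -/
def size : PF → ℕ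
  | nil => 0
  | node c r => 1 + c.size + r.size

/-- concatenation of arch systems -/
def append : PF → PF → PF
  | nil, q => q
  | node c r, q => node c (r.append q)

instance : Append PF := ⟨PF.append⟩

/-- an atom: a nonempty arch system with a single outermost arch -/
def IsAtom (a : PF) : Prop := ∃ c, a = node c nil

/-- an atom or the empty arch system -/
def AtomOrNil (a : PF) : Prop := a = nil ∨ IsAtom a

/-- One-step arch deletion: `Del X Y` means `Y` is obtained from `X` by deleting one arch
(the contents of a deleted arch are spliced in its place). -/
inductive Del : PF → PF → Prop
  | root (c r : PF) : Del (node c r) (c ++ r)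
  | inside {c c' : PF} (r : PF) : Del c c' → Del (node c r) (node c' r)
  | rest {r r' : PF} (c : PF) : Del r r' → Del (node c r) (node c r')

/-- `Contains X A` : `A` is a substructure (subsystem) of `X`. -/
def Contains (X A : PF) : Prop := Relation.ReflTransGen Del X A

/-- the class of arch systems avoiding `A` -/
def Av (A : PF) : Set PF := {X | ¬ Contains X A}

/-- Wilf-equivalence: same counting sequence by number of arches. -/
def WilfEq (A B : PF) : Prop :=
  ∀ n, Set.ncard {X | X ∈ Av A ∧ X.size = n} = Set.ncard {X | X ∈ Av B ∧ X.size = n}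

/-- the generating function of `Av A`, counting by number of arches -/
noncomputable def F (A : PF) : PowerSeries ℚ :=
  PowerSeries.mk fun n => (Set.ncard {X | X ∈ Av A ∧ X.size = n} : ℚ)

end PF

/-- concatenation of a list of arch systems -/
def concatList (L : List PF) : PF := L.foldr (· ++ ·) PF.nil

/-- The equivalence relation `∼` whose classes are cohorts: the finest equivalence
relation satisfying the four closure rules. -/
inductive Sim : PF → PF → Prop
  | refl (A : PF) : Sim A A
  | symm {A B : PF} : Sim A B → Sim B A
  | trans {A B C : PF} : Sim A B → Sim B C → Sim A C
  | arch {A B : PF} : Sim A B → Sim (PF.node A PF.nil) (PF.node B PF.nil)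
  | subst {a b : PF} (P Q : PF) : PF.AtomOrNil a → PF.AtomOrNil b → Sim a b →
      Sim (P ++ a ++ Q) (P ++ b ++ Q)
  | comm {a b : PF} (P Q : PF) : PF.AtomOrNil a → PF.AtomOrNil b →
      Sim (P ++ a ++ b ++ Q) (P ++ b ++ a ++ Q)
  | rot {a b c : PF} : PF.AtomOrNil a → PF.AtomOrNil b → PF.AtomOrNil c →
      Sim (a ++ PF.node (b ++ c) PF.nil) (PF.node (a ++ b) PF.nil ++ c)

/-- the nest of `n` nested arches -/
def nest : ℕ → PF
  | 0 => PF.nil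
  | n + 1 => PF.node (nest n) PF.nil

/-- the `n`-th Motzkin number -/
def motzkin (n : ℕ) : ℕ := ∑ k ∈ Finset.range (n + 1), n.choose (2 * k) * catalan k

/-- the truncated continued fractions `C_n` of the Catalan generating function -/
noncomputable def Cfun : ℕ → PowerSeries ℚ
  | 0 => 1
  | n + 1 => (1 - PowerSeries.X * Cfun n)⁻¹

/-- a balanced parenthesis word (Dyck word): `true` = opening, `false` = closing -/
def BalancedW (w : List Bool) : Prop :=
  w.count true = w.count false ∧ ∀ p : List Bool, p <+: w → p.count false ≤ p.count true

/-- the height of a Dyck path -/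
def wheight (w : List Bool) : ℕ :=
  (w.inits.map fun p => p.count true - p.count false).foldr max 0

/-- One-step deletion of a matched pair of parentheses (an arch) in a word. -/
inductive WDel : List Bool → List Bool → Prop
  | mk (x y z : List Bool) : BalancedW y →
      WDel (x ++ [true] ++ y ++ [false] ++ z) (x ++ y ++ z)

/-- `l` avoids the pattern 231 -/
def Avoids231 (l : List ℕ) : Prop := ¬ ∃ a b c : ℕ, [b, c, a].Sublist l ∧ a < b ∧ b < c

/-- `p` and `s` are order-isomorphic sequences -/
def OrdIso (p s : List ℕ) : Prop :=
  p.length = s.length ∧ ∀ i j : ℕ, i < p.length → j < p.length →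
    (p.getD i 0 < p.getD j 0 ↔ s.getD i 0 < s.getD j 0)

/-!
A plane forest is written as a Dyck word by reading each node as an opening parenthesis, then
its subtrees, then a closing parenthesis. A balanced word followed by a closing parenthesis
determines where that word ends, which makes the encoding injective; a word with `k` unmatched
closing parentheses parses into `k + 1` forests, which makes it surjective. Deleting a node of
the forest deletes a matched pair of the word, and conversely a matched pair of the word of
`node c r` is either the outer pair or lies inside `c` or inside `r`: a balanced factor cannot
straddle the closing parenthesis of `c`, by counting parentheses.
-/

namespace PF

def toWord : PF → List Bool
  | nil => []
  | node c r => true :: (c.toWord ++ false :: r.toWord)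

@[simp]
lemma toWord_nil : nil.toWord = [] := rfl

@[simp]
lemma toWord_node (c r : PF) : (node c r).toWord = true :: (c.toWord ++ false :: r.toWord) :=
  rfl

@[simp]
lemma node_append (c r X : PF) : node c r ++ X = node c (r ++ X) := rfl

@[simp]
lemma toWord_append (X Y : PF) : (X ++ Y).toWord = X.toWord ++ Y.toWord := by
  induction X with
  | nil => rfl
  | node c r _ ihr => simp [ihr]

lemma count_toWord (X : PF) (b : Bool) : X.toWord.count b = X.size := by
  induction X with
  | nil => rfl
  | node c r ihc ihr => cases b <;> simp [size, ihc, ihr] <;> omega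

lemma count_false_le_count_true_of_prefix {X : PF} {p : List Bool} (hp : p <+: X.toWord) :
    p.count false ≤ p.count true := by
  induction X generalizing p with
  | nil => simp [List.prefix_nil.mp hp]
  | node c r ihc ihr =>
    obtain ⟨t, ht⟩ := hp
    rcases p with _ | ⟨b, p⟩
    · simp
    obtain ⟨rfl, hpt⟩ : b = true ∧ p ++ t = c.toWord ++ false :: r.toWord := by simpa using ht
    rcases List.append_eq_append_iff.mp hpt with ⟨m, hc, -⟩ | ⟨m, rfl, hm⟩
    · have := ihc ⟨m, hc.symm⟩
      simp
      omega
    rcases m with _ | ⟨b, m⟩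
    · simp [count_toWord]
    obtain ⟨rfl, hr⟩ : b = false ∧ r.toWord = m ++ t := by simpa using hm
    have := ihr ⟨t, hr.symm⟩
    simp [count_toWord]
    omega

lemma count_true_le_count_false_of_suffix {X : PF} {p s : List Bool}
    (h : X.toWord = p ++ s) : s.count true ≤ s.count false := by
  have hp := count_false_le_count_true_of_prefix ⟨s, h.symm⟩
  have hcount := count_toWord X true
  rw [← count_toWord X false, h, List.count_append, List.count_append] at hcount
  omega

lemma balancedW_toWord (X : PF) : BalancedW X.toWord :=
  ⟨by rw [count_toWord, count_toWord], fun _ => count_false_le_count_true_of_prefix⟩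

lemma toWord_append_cons_false_inj {X Y : PF} {s t : List Bool}
    (h : X.toWord ++ false :: s = Y.toWord ++ false :: t) : X = Y ∧ s = t := by
  induction X generalizing Y s t with
  | nil => cases Y <;> simp_all
  | node c r ihc ihr =>
    cases Y with
    | nil => simp at h
    | node c' r' =>
      obtain ⟨rfl, h⟩ := ihc (by simpa using h)
      obtain ⟨rfl, rfl⟩ := ihr (by simpa using h)
      exact ⟨rfl, rfl⟩

lemma toWord_injective : Function.Injective toWord := fun X Y h =>
  (toWord_append_cons_false_inj (s := []) (t := []) (by rw [h])).1

lemma exists_eq_toWord_append_flatMap (w : List Bool) (k : ℕ)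
    (hpre : ∀ p, p <+: w → p.count false ≤ p.count true + k)
    (hcount : w.count false = w.count true + k) :
    ∃ (X : PF) (L : List PF),
      L.length = k ∧ w = X.toWord ++ L.flatMap fun Y => false :: Y.toWord := by
  induction w generalizing k with
  | nil => exact ⟨nil, [], by simp at hcount; omega, rfl⟩
  | cons b w ih =>
    cases b with
    | true =>
      obtain ⟨X, L, hL, rfl⟩ := ih (k + 1)
        (fun p hp => by
          have := hpre (true :: p) (List.cons_prefix_cons.mpr ⟨rfl, hp⟩)
          simp at this
          omega)
        (by simp at hcount; omega)
      obtain ⟨Y, L, rfl⟩ := List.exists_cons_of_length_eq_add_one hL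
      exact ⟨node X Y, L, by simpa using hL, by simp⟩
    | false =>
      obtain ⟨k, rfl⟩ : ∃ k', k = k' + 1 := by
        have := hpre [false] (by simp)
        simp at this
        exact Nat.exists_eq_add_one.mpr this
      obtain ⟨X, L, hL, rfl⟩ := ih k
        (fun p hp => by
          have := hpre (false :: p) (List.cons_prefix_cons.mpr ⟨rfl, hp⟩)
          simp at this
          omega)
        (by simp at hcount; omega)
      exact ⟨nil, X :: L, by simp [hL], by simp⟩

lemma _root_.BalancedW.exists_toWord_eq {w : List Bool} (hw : BalancedW w) :
    ∃ X : PF, X.toWord = w := by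
  obtain ⟨X, L, hL, rfl⟩ := exists_eq_toWord_append_flatMap w 0
    hw.2 hw.1.symm
  exact ⟨X, by simp [List.length_eq_zero_iff.mp hL]⟩

lemma _root_.WDel.append_append {u v : List Bool} (p s : List Bool) (h : WDel u v) :
    WDel (p ++ u ++ s) (p ++ v ++ s) := by
  obtain ⟨x, y, z, hy⟩ := h
  simpa using WDel.mk (p ++ x) y (z ++ s) hy

lemma Del.wdel_toWord {X Y : PF} (h : Del X Y) : WDel X.toWord Y.toWord := by
  induction h with
  | root c r => simpa using WDel.mk [] c.toWord r.toWord (balancedW_toWord c)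
  | inside r _ ih => simpa using ih.append_append [true] (false :: r.toWord)
  | rest c _ ih => simpa using ih.append_append (true :: (c.toWord ++ [false])) []

lemma toWord_append_cons_false_eq_cases {c Y : PF} {s x z : List Bool}
    (h : c.toWord ++ false :: s = x ++ true :: (Y.toWord ++ false :: z)) :
    (∃ z₁, c.toWord = x ++ true :: (Y.toWord ++ false :: z₁) ∧ z = z₁ ++ false :: s) ∨
    (∃ x₁, x = c.toWord ++ false :: x₁ ∧ s = x₁ ++ true :: (Y.toWord ++ false :: z)) := by
  rcases List.append_eq_append_iff.mp h with ⟨m, rfl, hm⟩ | ⟨m, hc, hm⟩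
  · rcases m with _ | ⟨b, m⟩
    · simp at hm
    obtain ⟨rfl, rfl⟩ : b = false ∧ s = m ++ true :: (Y.toWord ++ false :: z) := by
      simpa using hm
    exact Or.inr ⟨m, rfl, rfl⟩
  rcases m with _ | ⟨b, m⟩
  · simp at hm
  obtain ⟨rfl, hm'⟩ : b = true ∧ Y.toWord ++ false :: z = m ++ false :: s := by
    simpa using hm
  rcases List.append_eq_append_iff.mp hm' with ⟨d, rfl, hd⟩ | ⟨d, hY, -⟩
  · rcases d with _ | ⟨b, d⟩
    · simpa [count_toWord] using count_true_le_count_false_of_suffix hc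
    obtain ⟨rfl, rfl⟩ : b = false ∧ z = d ++ false :: s := by simpa using hd
    exact Or.inl ⟨d, by simpa using hc, rfl⟩
  · have hsuf := count_true_le_count_false_of_suffix hc
    have hpre := count_false_le_count_true_of_prefix (X := Y) ⟨d, hY.symm⟩
    simp at hsuf
    omega

lemma exists_del_of_toWord_eq {X Y : PF} {x z : List Bool}
    (h : X.toWord = x ++ true :: (Y.toWord ++ false :: z)) :
    ∃ X', Del X X' ∧ X'.toWord = x ++ Y.toWord ++ z := by
  induction X generalizing x z with
  | nil => simp at h
  | node c r ihc ihr =>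
    rcases x with _ | ⟨b, x⟩
    · obtain ⟨rfl, rfl⟩ := toWord_append_cons_false_inj (by simpa using h)
      exact ⟨c ++ r, Del.root c r, by simp⟩
    obtain ⟨rfl, h'⟩ : b = true ∧
        c.toWord ++ false :: r.toWord = x ++ true :: (Y.toWord ++ false :: z) := by
      simpa using h
    rcases toWord_append_cons_false_eq_cases h' with ⟨z₁, hc, rfl⟩ | ⟨x₁, rfl, hr⟩
    · obtain ⟨c', hdel, hc'⟩ := ihc hc
      exact ⟨node c' r, Del.inside r hdel, by simp [hc']⟩
    · obtain ⟨r', hdel, hr'⟩ := ihr hr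
      exact ⟨node c r', Del.rest c hdel, by simp [hr']⟩

lemma exists_del_of_wdel_toWord {X : PF} {v : List Bool} (h : WDel X.toWord v) :
    ∃ X', Del X X' ∧ X'.toWord = v := by
  generalize hw : X.toWord = w at h
  obtain ⟨x, y, z, hy⟩ := h
  obtain ⟨Y, rfl⟩ := hy.exists_toWord_eq
  exact exists_del_of_toWord_eq (by simpa using hw)

lemma reflTransGen_wdel_toWord_iff {X Y : PF} :
    Relation.ReflTransGen WDel X.toWord Y.toWord ↔ Contains X Y := by
  refine ⟨fun h => ?_, fun h => h.lift toWord fun _ _ => Del.wdel_toWord⟩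
  suffices ∀ v, Relation.ReflTransGen WDel X.toWord v → ∃ Z, Z.toWord = v ∧ Contains X Z by
    obtain ⟨Z, hZ, hXZ⟩ := this _ h
    rwa [toWord_injective hZ] at hXZ
  intro v hv
  induction hv with
  | refl => exact ⟨X, rfl, .refl⟩
  | tail _ hstep ih =>
    obtain ⟨Z, rfl, hXZ⟩ := ih
    obtain ⟨Z', hdel, rfl⟩ := exists_del_of_wdel_toWord hstep
    exact ⟨Z', rfl, hXZ.tail hdel⟩

def toDyck (X : PF) : {w : List Bool // BalancedW w} := ⟨X.toWord, balancedW_toWord X⟩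

lemma toDyck_bijective : Function.Bijective toDyck :=
  ⟨fun _ _ h => toWord_injective (congrArg Subtype.val h),
    fun w => (w.2.exists_toWord_eq.imp fun _ hX => Subtype.ext hX)⟩

end PF

/-- There is a size-preserving bijection between arch systems (balanced words)
and plane forests which respects the substructure relation. -/
theorem arch_systems_equiv_plane_forests :
    ∃ e : {w : List Bool // BalancedW w} ≃ PF,
      (∀ w : {w : List Bool // BalancedW w}, (e w).size = w.val.count true) ∧
      (∀ v w : {w : List Bool // BalancedW w},
        Relation.ReflTransGen WDel w.val v.val ↔ PF.Contains (e w) (e v)) := by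
  let e := Equiv.ofBijective _ PF.toDyck_bijective
  have toWord_symm (w : {w : List Bool // BalancedW w}) : (e.symm w).toWord = w.val :=
    congrArg Subtype.val (e.apply_symm_apply w)
  refine ⟨e.symm, fun w => ?_, fun v w => ?_⟩
  · rw [← toWord_symm w, PF.count_toWord]
  · rw [← toWord_symm w, ← toWord_symm v, PF.reflTransGen_wdel_toWord_iff]
end

section
/- A permutation is sortable by a single pass through a stack if and only if it avoids the pattern 231, and the map sending each stack-sortable permutation to the Dyck path of its push/pop operations is a bijection between 231-avoiding permutations of size n and Dyck paths of semi-length n. -/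
/-- Running a sequence of stack operations (`true` = push, `false` = pop) on an
input list, producing the output list of popped elements. -/
def runStack : List Bool → List ℕ → List ℕ → List ℕ
  | [], _, _ => []
  | true :: w, x :: inp, st => runStack w inp (x :: st)
  | true :: _, [], _ => []
  | false :: w, inp, x :: st => x :: runStack w inp st
  | false :: _, _, [] => []

/-- `w` is a valid sequence of stack operations sorting the permutation `p`. -/
def Sorts (w : List Bool) (p : List ℕ) : Prop :=
  BalancedW w ∧ w.count true = p.length ∧ runStack w p [] = List.range' 1 p.length

/-!
Sortability passes to patterns: deleting some values from the input of a sorting run, together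
with the operations that move them, leaves a sorting run. And `231` cannot be sorted: `2` has to
leave the stack before `3` is pushed on top of it, hence before `1` has arrived. Conversely, if
`x :: q` avoids 231 then the entries of `q` below `x` all precede those above it, so pushing `x`,
sorting the small entries, popping `x` and sorting the large ones sorts `x :: q`.

The input of a complete run is determined by its operations and output (read backwards, each pop
tells what was pushed), and for distinct entries the operations are determined by input and
output, since an element buried in the stack cannot be output next. As every Dyck word is the
operation sequence of a run with output `1, …, n`, sorting words give the bijection.
-/

theorem Relator.exists_equiv_of_biTotal_of_biUnique {α β : Type*} {R : α → β → Prop}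
    (ht : BiTotal R) (hu : BiUnique R) : ∃ e : α ≃ β, ∀ a, R a (e a) := by
  choose f hf using ht.1
  refine ⟨Equiv.ofBijective f ⟨fun a a' h => hu.1 (hf a) (h ▸ hf a'), fun b => ?_⟩, hf⟩
  obtain ⟨a, ha⟩ := ht.2 b
  exact ⟨a, hu.2 (hf a) ha⟩

theorem List.Sublist.filter_mem_eq {α : Type*} [DecidableEq α] {l p : List α} (h : l.Sublist p)
    (hp : p.Nodup) : p.filter (· ∈ l) = l := by
  refine (hp.perm_iff_eq_of_sublist List.filter_sublist h).1 ?_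
  refine (List.perm_ext_iff_of_nodup (hp.sublist List.filter_sublist) (hp.sublist h)).2 fun y => ?_
  simpa using fun hy => h.subset hy

theorem List.Pairwise.filter_lt_append_cons_filter_gt {α : Type*} [LinearOrder α] {x : α}
    {l : List α} (hl : l.Pairwise (· < ·)) (hx : x ∈ l) :
    l.filter (· < x) ++ x :: l.filter (x < ·) = l := by
  induction l with
  | nil => simp at hx
  | cons y l ih =>
    rw [List.pairwise_cons] at hl
    rcases List.mem_cons.1 hx with rfl | hx
    · have h₁ : l.filter (· < x) = [] :=
        List.filter_eq_nil_iff.2 fun z hz => by simpa using (hl.1 z hz).le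
      have h₂ : l.filter (x < ·) = l :=
        List.filter_eq_self.2 fun z hz => by simpa using hl.1 z hz
      simp [h₁, h₂]
    · have hyx := hl.1 x hx
      simp [hyx, hyx.not_gt, ih hl.2 hx]

/-- `StackRun w inp st out`: performing `w` on input `inp` and stack `st` (top first) empties
both and outputs `out`. -/
inductive StackRun : List Bool → List ℕ → List ℕ → List ℕ → Prop
  | nil : StackRun [] [] [] []
  | push {w : List Bool} {inp st out : List ℕ} (x : ℕ) :
      StackRun w inp (x :: st) out → StackRun (true :: w) (x :: inp) st out
  | pop {w : List Bool} {inp st out : List ℕ} (x : ℕ) :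
      StackRun w inp st out → StackRun (false :: w) inp (x :: st) (x :: out)

inductive DyckFrom : ℕ → List Bool → Prop
  | nil : DyckFrom 0 []
  | up {h : ℕ} {w : List Bool} : DyckFrom (h + 1) w → DyckFrom h (true :: w)
  | down {h : ℕ} {w : List Bool} : DyckFrom h w → DyckFrom (h + 1) (false :: w)

theorem dyckFrom_iff {h : ℕ} {w : List Bool} :
    DyckFrom h w ↔ w.count false = w.count true + h ∧
      ∀ u, u <+: w → u.count false ≤ u.count true + h := by
  induction w generalizing h with
  | nil =>
    constructor
    · rintro ⟨⟩; simp
    · rintro ⟨h0, -⟩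
      obtain rfl : h = 0 := by simpa using h0.symm
      exact .nil
  | cons b w ih =>
    cases b with
    | true =>
      have : DyckFrom h (true :: w) ↔ DyckFrom (h + 1) w :=
        ⟨by rintro ⟨⟩; assumption, .up⟩
      simp only [this, ih, List.prefix_cons_iff, forall_eq_or_imp, forall_exists_index,
        and_imp, List.count_cons]
      grind
    | false =>
      cases h with
      | zero =>
        refine iff_of_false (by rintro ⟨⟩) fun ⟨_, hpre⟩ => ?_
        simpa using hpre [false] (List.prefix_cons_iff.2 (.inr ⟨[], rfl, List.nil_prefix⟩))
      | succ h =>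
        have : DyckFrom (h + 1) (false :: w) ↔ DyckFrom h w :=
          ⟨by rintro ⟨⟩; assumption, .down⟩
        simp only [this, ih, List.prefix_cons_iff, forall_eq_or_imp, forall_exists_index,
          and_imp, List.count_cons]
        grind

theorem balancedW_iff_dyckFrom_zero {w : List Bool} : BalancedW w ↔ DyckFrom 0 w := by
  rw [dyckFrom_iff, BalancedW]
  simp [eq_comm]

namespace StackRun

variable {w : List Bool} {inp st out : List ℕ}

theorem perm (h : StackRun w inp st out) : out.Perm (inp ++ st) := by
  induction h with
  | nil => rfl
  | push x _ ih => exact ih.trans List.perm_middle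
  | pop x _ ih => exact (ih.cons x).trans List.perm_middle.symm

theorem count_true (h : StackRun w inp st out) : w.count true = inp.length := by
  induction h <;> simp_all

theorem dyckFrom (h : StackRun w inp st out) : DyckFrom st.length w := by
  induction h with
  | nil => exact .nil
  | push x _ ih => exact .up ih
  | pop x _ ih => exact .down ih

theorem runStack_eq (h : StackRun w inp st out) : runStack w inp st = out := by
  induction h <;> simp_all [runStack]

theorem head_mem {y : ℕ} {out' : List ℕ} (h : StackRun w inp st out) (hout : out = y :: out') :
    y ∈ inp ∨ st.head? = some y := by
  induction h with
  | nil => simp at hout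
  | push x _ ih =>
    have := ih hout
    simp only [List.head?_cons, Option.some.injEq] at this
    simp only [List.mem_cons]
    tauto
  | pop x _ _ => simp_all

theorem input_unique {inp' st' : List ℕ} (h : StackRun w inp st out)
    (h' : StackRun w inp' st' out) : inp = inp' ∧ st = st' := by
  induction h generalizing inp' st' with
  | nil => cases h'; simp
  | push x _ ih =>
    cases h' with
    | push x' h' => obtain ⟨rfl, hst⟩ := ih h'; simp_all
  | pop x _ ih =>
    cases h' with
    | pop x' h' => obtain ⟨rfl, rfl⟩ := ih h'; simp

theorem not_buried {x y : ℕ} (h : StackRun w inp (x :: y :: st) (y :: out))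
    (hnd : (x :: inp ++ y :: st).Nodup) : False := by
  simp only [List.cons_append, List.nodup_cons, List.nodup_append, List.mem_cons] at hnd
  rcases h.head_mem rfl with hy | hy
  · exact hnd.2.2.2 y hy y (.inl rfl) rfl
  · simp_all

theorem word_unique {w' : List Bool} (h : StackRun w inp st out) (h' : StackRun w' inp st out)
    (hnd : (inp ++ st).Nodup) : w = w' := by
  induction h generalizing w' with
  | nil => cases h'; rfl
  | push x h ih =>
    cases h' with
    | push _ h' => rw [ih h' (List.perm_middle.nodup_iff.2 hnd)]
    | pop y h' => exact (h.not_buried hnd).elim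
  | pop x h ih =>
    cases h' with
    | push y h' => exact (h'.not_buried (by simpa using hnd)).elim
    | pop _ h' => rw [ih h' (List.perm_middle.nodup_iff.1 hnd).of_cons]

theorem filter (P : ℕ → Bool) (h : StackRun w inp st out) :
    ∃ w', StackRun w' (inp.filter P) (st.filter P) (out.filter P) := by
  induction h with
  | nil => exact ⟨[], .nil⟩
  | push x _ ih =>
    obtain ⟨w', h'⟩ := ih
    by_cases hx : P x
    · simp only [List.filter_cons, hx, if_true] at h' ⊢
      exact ⟨true :: w', h'.push x⟩
    · exact ⟨w', by simpa [List.filter_cons, hx] using h'⟩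
  | pop x _ ih =>
    obtain ⟨w', h'⟩ := ih
    by_cases hx : P x
    · simp only [List.filter_cons, hx, if_true]
      exact ⟨false :: w', h'.pop x⟩
    · exact ⟨w', by simpa [List.filter_cons, hx] using h'⟩

theorem append {w₂ : List Bool} {inp₂ st₂ out₂ : List ℕ} (h : StackRun w inp st out)
    (h₂ : StackRun w₂ inp₂ st₂ out₂) :
    StackRun (w ++ w₂) (inp ++ inp₂) (st ++ st₂) (out ++ out₂) := by
  induction h with
  | nil => exact h₂
  | push x _ ih => exact .push x ih
  | pop x _ ih => exact .pop x ih

end StackRun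

theorem DyckFrom.stackRun_runStack {h : ℕ} {w : List Bool} {inp st : List ℕ} (hw : DyckFrom h w)
    (hst : st.length = h) (hc : w.count true = inp.length) :
    StackRun w inp st (runStack w inp st) := by
  induction hw generalizing inp st with
  | nil =>
    obtain rfl : inp = [] := List.eq_nil_of_length_eq_zero (by simpa using hc.symm)
    obtain rfl : st = [] := List.eq_nil_of_length_eq_zero hst
    exact .nil
  | up _ ih =>
    obtain _ | ⟨x, inp⟩ := inp
    · simp at hc
    · exact .push x (ih (by simpa using hst) (by simpa using hc))
  | down _ ih =>
    obtain _ | ⟨x, st⟩ := st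
    · simp at hst
    · exact .pop x (ih (by simpa using hst) (by simpa using hc))

theorem DyckFrom.exists_stackRun {h : ℕ} {w : List Bool} {out : List ℕ} (hw : DyckFrom h w)
    (hout : out.length = w.count false) : ∃ inp st, st.length = h ∧ StackRun w inp st out := by
  induction hw generalizing out with
  | nil =>
    obtain rfl : out = [] := by simpa using hout
    exact ⟨[], [], rfl, .nil⟩
  | up _ ih =>
    obtain ⟨inp, _ | ⟨x, st⟩, hst, hrun⟩ := ih (by simpa using hout)
    · simp at hst
    · exact ⟨x :: inp, st, by simpa using hst, .push x hrun⟩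
  | down _ ih =>
    obtain _ | ⟨y, out⟩ := out
    · simp at hout
    · obtain ⟨inp, st, rfl, hrun⟩ := ih (by simpa using hout)
      exact ⟨inp, y :: st, rfl, .pop y hrun⟩

theorem sorts_iff_stackRun {w : List Bool} {p : List ℕ} :
    Sorts w p ↔ StackRun w p [] (List.range' 1 p.length) := by
  refine ⟨fun ⟨hw, hc, hrun⟩ => ?_, fun h => ⟨?_, h.count_true, h.runStack_eq⟩⟩
  · rw [← hrun]
    exact (balancedW_iff_dyckFrom_zero.1 hw).stackRun_runStack rfl hc
  · exact balancedW_iff_dyckFrom_zero.2 h.dyckFrom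

theorem not_stackRun_231 {w : List Bool} {a b c : ℕ} {out : List ℕ} (hab : a < b) (hbc : b < c)
    (hout : out.Pairwise (· < ·)) : ¬ StackRun w [b, c, a] [] out := by
  intro h
  obtain _ | ⟨_, h⟩ := h
  obtain _ | ⟨_, h⟩ | ⟨_, h⟩ := h
  · obtain _ | ⟨_, h⟩ | ⟨_, h⟩ := h
    · obtain _ | _ | ⟨_, h⟩ := h
      obtain _ | _ | ⟨_, h⟩ := h
      have := List.rel_of_pairwise_cons hout.of_cons
        (h.perm.mem_iff.2 (by simp : b ∈ [] ++ [b]))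
      omega
    · have := List.rel_of_pairwise_cons hout (h.perm.mem_iff.2 (by simp : a ∈ [a] ++ [b]))
      omega
  · have := List.rel_of_pairwise_cons hout (h.perm.mem_iff.2 (by simp : a ∈ [c, a] ++ []))
    omega

theorem StackRun.avoids231 {w : List Bool} {p out : List ℕ} (h : StackRun w p [] out)
    (hout : out.Pairwise (· < ·)) : Avoids231 p := by
  rintro ⟨a, b, c, hsub, hab, hbc⟩
  have hp : p.Nodup := by simpa using h.perm.nodup_iff.1 hout.nodup
  obtain ⟨w', h'⟩ := h.filter (· ∈ [b, c, a])
  rw [hsub.filter_mem_eq hp, List.filter_nil] at h'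
  exact not_stackRun_231 hab hbc (hout.filter _) h'

theorem Avoids231.sublist {p q : List ℕ} (hp : Avoids231 p) (h : q.Sublist p) : Avoids231 q :=
  fun ⟨a, b, c, hsub, hab, hbc⟩ => hp ⟨a, b, c, hsub.trans h, hab, hbc⟩

theorem Avoids231.filter_lt_append_filter_gt {x : ℕ} {q : List ℕ} (hp : Avoids231 (x :: q))
    (hx : x ∉ q) : q.filter (· < x) ++ q.filter (x < ·) = q := by
  induction q with
  | nil => rfl
  | cons y q ih =>
    have hxy : x ≠ y := fun h => hx (h ▸ List.mem_cons_self)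
    rcases lt_or_gt_of_ne hxy with hxy | hyx
    · have hq : ∀ z ∈ q, x < z := fun z hz => by
        by_contra hzx
        have hzx : z < x :=
          lt_of_le_of_ne (not_lt.1 hzx) fun h => hx (h ▸ List.mem_cons_of_mem y hz)
        exact hp ⟨z, x, y, (List.singleton_sublist.2 hz).cons_cons y |>.cons_cons x, hzx, hxy⟩
      have h₁ : q.filter (· < x) = [] :=
        List.filter_eq_nil_iff.2 fun z hz => by simpa using (hq z hz).le
      have h₂ : q.filter (x < ·) = q :=
        List.filter_eq_self.2 fun z hz => by simpa using hq z hz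
      simp [hxy, hxy.not_gt, h₁, h₂]
    · have := ih (hp.sublist ((List.sublist_cons_self y q).cons_cons x))
        fun h => hx (List.mem_cons_of_mem y h)
      simp [hyx, hyx.not_gt, this]

theorem Avoids231.exists_stackRun {p out : List ℕ} (hp : Avoids231 p) (hperm : p.Perm out)
    (hout : out.Pairwise (· < ·)) : ∃ w, StackRun w p [] out :=
  match p with
  | [] => by
    obtain rfl := hperm.nil_eq.symm
    exact ⟨[], .nil⟩
  | x :: q => by
    have hx : x ∉ q := (List.nodup_cons.1 (hperm.nodup_iff.2 hout.nodup)).1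
    have hq := hp.filter_lt_append_filter_gt hx
    have hsplit := hout.filter_lt_append_cons_filter_gt (hperm.subset List.mem_cons_self)
    obtain ⟨w₁, h₁⟩ := (hp.sublist (List.filter_sublist.cons x)).exists_stackRun
      (by simpa [List.filter_cons] using hperm.filter (· < x)) (hout.filter _)
    obtain ⟨w₂, h₂⟩ := (hp.sublist (List.filter_sublist.cons x)).exists_stackRun
      (by simpa [List.filter_cons] using hperm.filter (x < ·)) (hout.filter _)
    rw [← hq, ← hsplit]
    exact ⟨true :: (w₁ ++ false :: w₂), .push x (h₁.append (.pop x h₂))⟩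
termination_by p.length
decreasing_by all_goals simpa using Nat.lt_succ_of_le (List.length_filter_le _ _)

namespace Sorts

variable {w : List Bool} {p : List ℕ}

theorem avoids231 (h : Sorts w p) : Avoids231 p :=
  (sorts_iff_stackRun.1 h).avoids231 (List.pairwise_lt_range' _)

theorem input_unique {p' : List ℕ} (h : Sorts w p) (h' : Sorts w p') : p = p' := by
  have hlen : p'.length = p.length := h'.2.1.symm.trans h.2.1
  rw [sorts_iff_stackRun, hlen] at h'
  exact ((sorts_iff_stackRun.1 h).input_unique h').1

theorem word_unique {w' : List Bool} (h : Sorts w p) (h' : Sorts w' p) : w = w' := by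
  rw [sorts_iff_stackRun] at h h'
  exact h.word_unique h' (by simpa using h.perm.nodup_iff.1 (List.nodup_range' _))

end Sorts

theorem Avoids231.exists_sorts {n : ℕ} {p : List ℕ} (hp : Avoids231 p)
    (hperm : p.Perm (List.range' 1 n)) : ∃ w, Sorts w p := by
  obtain rfl : n = p.length := by simpa using hperm.length_eq.symm
  exact (hp.exists_stackRun hperm (List.pairwise_lt_range' _)).imp fun _ => sorts_iff_stackRun.2

theorem BalancedW.exists_sorts {w : List Bool} (hw : BalancedW w) :
    ∃ p, p.Perm (List.range' 1 (w.count true)) ∧ Sorts w p := by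
  obtain ⟨p, _, hst, h⟩ := (balancedW_iff_dyckFrom_zero.1 hw).exists_stackRun
    (out := List.range' 1 (w.count true)) (by simpa using hw.1)
  obtain rfl := List.eq_nil_of_length_eq_zero hst
  refine ⟨p, by simpa using h.perm.symm, sorts_iff_stackRun.2 ?_⟩
  rwa [← h.count_true]

/-- A permutation is sortable by a single pass through a stack iff it avoids 231,
and recording pushes and pops as up and down steps is a bijection between
231-avoiding permutations of size `n` and Dyck paths of semi-length `n`. -/
theorem stack_sortable_iff_avoids_231 (n : ℕ) :
    (∀ p : List ℕ, p.Perm (List.range' 1 n) → ((∃ w, Sorts w p) ↔ Avoids231 p)) ∧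
    ∃ e : {p : List ℕ // p.Perm (List.range' 1 n) ∧ Avoids231 p} ≃
        {w : List Bool // BalancedW w ∧ w.count true = n},
      ∀ p, Sorts (e p).val p.val := by
  refine ⟨fun p hp => ⟨fun ⟨_, h⟩ => h.avoids231, fun h => h.exists_sorts hp⟩, ?_⟩
  refine Relator.exists_equiv_of_biTotal_of_biUnique
    (R := fun (p : {p // _}) (w : {w // _}) => Sorts w.val p.val) ⟨?_, ?_⟩
    ⟨fun _ _ _ h h' => Subtype.ext (h.input_unique h'),
      fun _ _ _ h h' => Subtype.ext (h.word_unique h')⟩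
  · rintro ⟨p, hp, hav⟩
    obtain ⟨w, h⟩ := hav.exists_sorts hp
    exact ⟨⟨w, h.1, h.2.1.trans (by simpa using hp.length_eq)⟩, h⟩
  · rintro ⟨w, hw, rfl⟩
    obtain ⟨p, hp, h⟩ := hw.exists_sorts
    exact ⟨⟨p, hp, h.avoids231⟩, h⟩
end

section
/- The generating functions C_n defined by C_0 = 1 and C_n = 1/(1 - t C_{n-1}) converge coefficientwise to the Catalan generating function C(t) = Σ Cat_m t^m; more precisely, the coefficient of t^m in C_n equals Cat_m whenever m ≤ n. -/
/-! Since `C_{n+1} = 1 + t C_n C_{n+1}`, the coefficient of `t^(m+1)` in `C_{n+1}` is the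
convolution of the coefficients of degree `≤ m` of `C_n` and `C_{n+1}`. By strong induction on
`m` these are Catalan numbers, and the convolution is Segner's recurrence for `Cat_(m+1)`. -/

namespace PowerSeries

theorem inv_one_sub_X_mul {k : Type*} [Field k] (f : k⟦X⟧) :
    (1 - X * f)⁻¹ = 1 + X * (f * (1 - X * f)⁻¹) := by
  linear_combination PowerSeries.mul_inv_cancel (1 - X * f) (by simp)

open Finset in
theorem coeff_succ_one_add_X_mul_mul {R : Type*} [CommSemiring R] (m : ℕ) (f g : R⟦X⟧) :
    coeff (m + 1) (1 + X * (f * g)) =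
      ∑ p ∈ antidiagonal m, coeff p.1 f * coeff p.2 g := by
  rw [map_add, coeff_succ_X_mul, coeff_mul, coeff_one, if_neg m.succ_ne_zero, zero_add]

end PowerSeries

theorem Cfun_succ (n : ℕ) : Cfun (n + 1) = 1 + PowerSeries.X * (Cfun n * Cfun (n + 1)) :=
  PowerSeries.inv_one_sub_X_mul (Cfun n)

theorem coeff_zero_Cfun (n : ℕ) : PowerSeries.coeff 0 (Cfun n) = 1 := by
  cases n with
  | zero => simp [Cfun]
  | succ n => rw [Cfun_succ]; simp

/-- The coefficient of `t^m` in `C_n` equals the `m`-th Catalan number whenever `m ≤ n`. -/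
theorem Cfun_coeff_eq_catalan (n m : ℕ) (h : m ≤ n) :
    PowerSeries.coeff m (Cfun n) = (catalan m : ℚ) := by
  induction m using Nat.strong_induction_on generalizing n with
  | _ m ih =>
  obtain _ | m := m
  · simp [coeff_zero_Cfun]
  obtain _ | n := n
  · omega
  rw [Cfun_succ, PowerSeries.coeff_succ_one_add_X_mul_mul, catalan_succ', Nat.cast_sum]
  refine Finset.sum_congr rfl fun p hp => ?_
  rw [Finset.HasAntidiagonal.mem_antidiagonal] at hp
  rw [ih p.1 (by omega) n (by omega), ih p.2 (by omega) (n + 1) (by omega), Nat.cast_mul]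
end

section
/- For any atoms a, b and arch systems P, Q, the classes Av(PabQ) and Av(PbaQ) are Wilf-equivalent. -/
/-! ### Auxiliary development for `wilfEq_comm` -/

namespace PFW
open PF

@[simp] lemma nil_append (q : PF) : (PF.nil ++ q) = q := rfl
@[simp] lemma node_append (c r q : PF) : (PF.node c r ++ q) = PF.node c (r ++ q) := rfl

@[simp] lemma append_eq (X Y : PF) : PF.append X Y = X ++ Y := rfl

@[simp] lemma append_nil (X : PF) : X ++ PF.nil = X := by
  induction X with
  | nil => rfl
  | node c r ihc ihr => simp [ihr]

lemma append_assoc (X Y Z : PF) : X ++ Y ++ Z = X ++ (Y ++ Z) := by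
  induction X with
  | nil => rfl
  | node c r ihc ihr => simp [ihr]

@[simp] lemma size_append (X Y : PF) : (X ++ Y).size = X.size + Y.size := by
  induction X with
  | nil => simp [PF.size]
  | node c r ihc ihr => simp only [node_append, PF.size, append_eq, ihr]; omega

lemma append_eq_nil {U V : PF} (h : U ++ V = PF.nil) : U = PF.nil ∧ V = PF.nil := by
  cases U with
  | nil => exact ⟨rfl, h⟩
  | node c r => simp at h

/-- number of top-level trees -/
def tlen : PF → ℕ
  | .nil => 0
  | .node _ r => tlen r + 1

@[simp] lemma tlen_nil : tlen PF.nil = 0 := rfl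
@[simp] lemma tlen_node (c r : PF) : tlen (PF.node c r) = tlen r + 1 := rfl

@[simp] lemma tlen_append (X Y : PF) : tlen (X ++ Y) = tlen X + tlen Y := by
  induction X with
  | nil => simp
  | node c r ihc ihr => simp only [node_append, tlen_node, ihr]; omega

/-- reversal of the top-level sequence of trees -/
def rev : PF → PF
  | .nil => .nil
  | .node c r => rev r ++ PF.node c PF.nil

@[simp] lemma rev_nil : rev PF.nil = PF.nil := rfl
lemma rev_node (c r : PF) : rev (PF.node c r) = rev r ++ PF.node c PF.nil := rfl

@[simp] lemma size_rev (X : PF) : (rev X).size = X.size := by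
  induction X with
  | nil => rfl
  | node c r ihc ihr => simp only [rev_node, size_append, PF.size, ihr]; omega

@[simp] lemma tlen_rev (X : PF) : tlen (rev X) = tlen X := by
  induction X with
  | nil => rfl
  | node c r ihc ihr => simp [rev_node, ihr]

lemma rev_append (X Y : PF) : rev (X ++ Y) = rev Y ++ rev X := by
  induction X with
  | nil => simp
  | node c r ihc ihr => simp [rev_node, ihr, append_assoc]

@[simp] lemma rev_rev (X : PF) : rev (rev X) = X := by
  induction X with
  | nil => rfl
  | node c r ihc ihr => simp [rev_node, rev_append, ihr, rev]

/-- Embedding order on plane forests (equivalent to `Contains`). -/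
inductive Emb : PF → PF → Prop
  | nil : Emb .nil .nil
  | skip {c r A : PF} : Emb (c ++ r) A → Emb (.node c r) A
  | keep {c r z Z : PF} : Emb c z → Emb r Z → Emb (.node c r) (.node z Z)

lemma size_append_lt (c r : PF) : (c ++ r).size < (PF.node c r).size := by
  simp only [size_append, PF.size]; omega

/-- strong induction on size -/
lemma size_induction {motive : PF → Prop}
    (h : ∀ X, (∀ Y : PF, Y.size < X.size → motive Y) → motive X) : ∀ X, motive X := by
  have key : ∀ n (Y : PF), Y.size ≤ n → motive Y := by
    intro n
    induction n using Nat.strong_induction_on with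
    | _ n ih =>
      intro Y hY
      exact h Y (fun Z hZ => ih Z.size (lt_of_lt_of_le hZ hY) Z le_rfl)
  exact fun X => key X.size X le_rfl

lemma emb_nil_right : ∀ X : PF, Emb X .nil := by
  apply size_induction
  intro X ih
  cases X with
  | nil => exact .nil
  | node c r => exact .skip (ih _ (size_append_lt c r))

lemma emb_nil_left {A : PF} (h : Emb .nil A) : A = .nil := by cases h; rfl

lemma Emb.refl : ∀ X : PF, Emb X X
  | .nil => .nil
  | .node c r => .keep (Emb.refl c) (Emb.refl r)

lemma emb_append_mono {c c' r r' : PF} (h1 : Emb c c') (h2 : Emb r r') :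
    Emb (c ++ r) (c' ++ r') := by
  induction h1 with
  | nil => simpa using h2
  | @skip u v A h ih =>
    simp only [node_append]
    exact .skip (by rw [← append_assoc]; exact ih)
  | @keep u v z Z h1' h2' ih1 ih2 =>
    simp only [node_append]
    exact .keep h1' ih2

lemma emb_left_pad {V A : PF} (U : PF) (h : Emb V A) : Emb (U ++ V) A := by
  simpa using emb_append_mono (emb_nil_right U) h

lemma emb_right_pad {U A : PF} (V : PF) (h : Emb U A) : Emb (U ++ V) A := by
  have := emb_append_mono h (emb_nil_right V)
  simpa using this

lemma emb_trans : ∀ {X Y Z : PF}, Emb X Y → Emb Y Z → Emb X Z := by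
  suffices H : ∀ X : PF, ∀ Y Z : PF, Emb X Y → Emb Y Z → Emb X Z by
    intro X Y Z h1 h2; exact H X Y Z h1 h2
  apply size_induction
  intro X ih Y Z h1 h2
  cases h1 with
  | nil =>
    cases h2 with
    | nil => exact .nil
  | @skip c r _ h =>
    exact .skip (ih _ (size_append_lt c r) _ _ h h2)
  | @keep c r y Y' h1' h2' =>
    cases h2 with
    | @skip _ _ _ h =>
      exact .skip (ih _ (size_append_lt c r) _ _ (emb_append_mono h1' h2') h)
    | @keep _ _ z Z' g1 g2 =>
      have hc : c.size < (PF.node c r).size := by simp only [PF.size]; omega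
      have hr : r.size < (PF.node c r).size := by simp only [PF.size]; omega
      exact .keep (ih _ hc _ _ h1' g1) (ih _ hr _ _ h2' g2)

/-- The key splitting lemma: an embedding into a concatenation splits the pattern. -/
lemma emb_append_split : ∀ U : PF, ∀ V s : PF, Emb (U ++ V) s →
    ∃ s₁ s₂ : PF, s = s₁ ++ s₂ ∧ Emb U s₁ ∧ Emb V s₂ := by
  apply size_induction
  intro U ih V s h
  cases U with
  | nil =>
    exact ⟨.nil, s, rfl, .nil, by simpa using h⟩
  | node c u =>
    simp only [node_append] at h
    cases h with
    | @skip _ _ _ h' =>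
      rw [← append_assoc] at h'
      obtain ⟨s₁, s₂, rfl, hs₁, hs₂⟩ := ih (c ++ u) (size_append_lt c u) V s h'
      exact ⟨s₁, s₂, rfl, .skip hs₁, hs₂⟩
    | @keep _ _ z Z h1 h2 =>
      have hu : u.size < (PF.node c u).size := by simp only [PF.size]; omega
      obtain ⟨Z₁, Z₂, rfl, hZ₁, hZ₂⟩ := ih u hu V Z h2
      exact ⟨.node z Z₁, Z₂, rfl, .keep h1 hZ₁, hZ₂⟩

/-! ### Emb ↔ Contains -/

lemma contains_inside {c c' : PF} (r : PF) (h : PF.Contains c c') :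
    PF.Contains (PF.node c r) (PF.node c' r) := by
  induction h with
  | refl => exact .refl
  | tail _ hd ih => exact ih.tail (Del.inside r hd)

lemma contains_rest {r r' : PF} (c : PF) (h : PF.Contains r r') :
    PF.Contains (PF.node c r) (PF.node c r') := by
  induction h with
  | refl => exact .refl
  | tail _ hd ih => exact ih.tail (Del.rest c hd)

lemma contains_of_emb {X A : PF} (h : Emb X A) : PF.Contains X A := by
  induction h with
  | nil => exact .refl
  | skip _ ih => exact (Relation.ReflTransGen.single (Del.root _ _)).trans ih
  | keep _ _ ih1 ih2 => exact (contains_inside _ ih1).trans (contains_rest _ ih2)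

lemma emb_of_del {X Y : PF} (h : Del X Y) : Emb X Y := by
  induction h with
  | root c r => exact .skip (Emb.refl _)
  | inside r _ ih => exact .keep ih (Emb.refl _)
  | rest c _ ih => exact .keep (Emb.refl _) ih

lemma emb_of_contains {X A : PF} (h : PF.Contains X A) : Emb X A := by
  induction h with
  | refl => exact Emb.refl _
  | tail _ hd ih => exact emb_trans ih (emb_of_del hd)

lemma contains_iff_emb {X A : PF} : PF.Contains X A ↔ Emb X A :=
  ⟨emb_of_contains, contains_of_emb⟩

end PFW

namespace PFW
open PF

/-! ### Characterization lemmas -/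

lemma emb_node_inv {c r Z : PF} (h : Emb (PF.node c r) Z) :
    Emb (c ++ r) Z ∨ ∃ z Z', Z = PF.node z Z' ∧ Emb c z ∧ Emb r Z' := by
  cases h with
  | skip h => exact Or.inl h
  | keep h1 h2 => exact Or.inr ⟨_, _, rfl, h1, h2⟩

lemma append_eq_single {s₁ s₂ γ : PF} (h : s₁ ++ s₂ = PF.node γ PF.nil) :
    (s₁ = PF.nil ∧ s₂ = PF.node γ PF.nil) ∨ (s₁ = PF.node γ PF.nil ∧ s₂ = PF.nil) := by
  cases s₁ with
  | nil => exact Or.inl ⟨rfl, h⟩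
  | node d u =>
    simp only [node_append, PF.node.injEq] at h
    obtain ⟨rfl, h2⟩ := h
    obtain ⟨rfl, rfl⟩ := append_eq_nil h2
    exact Or.inr ⟨rfl, rfl⟩

lemma append_eq_pair {s₁ s₂ x y : PF} (h : s₁ ++ s₂ = PF.node x (PF.node y PF.nil)) :
    (s₁ = PF.nil ∧ s₂ = PF.node x (PF.node y PF.nil)) ∨
    (s₁ = PF.node x PF.nil ∧ s₂ = PF.node y PF.nil) ∨
    (s₁ = PF.node x (PF.node y PF.nil) ∧ s₂ = PF.nil) := by
  cases s₁ with
  | nil => exact Or.inl ⟨rfl, h⟩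
  | node d u =>
    simp only [node_append, PF.node.injEq] at h
    obtain ⟨rfl, h2⟩ := h
    rcases append_eq_single h2 with ⟨rfl, rfl⟩ | ⟨rfl, rfl⟩
    · exact Or.inr (Or.inl ⟨rfl, rfl⟩)
    · exact Or.inr (Or.inr ⟨rfl, rfl⟩)

/-- `γ ≤ ⟨c⟩` : the pattern `γ` fits under a single arch with contents `c`. -/
def bit (γ c : PF) : Prop := Emb c γ ∨ Emb c (PF.node γ PF.nil)

lemma emb_single_iff {c s : PF} :
    Emb (PF.node c PF.nil) s ↔ Emb c s ∨ ∃ z, s = PF.node z PF.nil ∧ Emb c z := by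
  constructor
  · intro h
    rcases emb_node_inv h with h | ⟨z, Z', rfl, h1, h2⟩
    · rw [append_nil] at h; exact Or.inl h
    · rw [emb_nil_left h2]; exact Or.inr ⟨z, rfl, h1⟩
  · rintro (h | ⟨z, rfl, h⟩)
    · exact .skip (by rwa [append_nil])
    · exact .keep h .nil

lemma hasArch_single {γ c : PF} : Emb (PF.node c PF.nil) (PF.node γ PF.nil) ↔ bit γ c := by
  rw [emb_single_iff]
  constructor
  · rintro (h | ⟨z, hz, h⟩)
    · exact Or.inr h
    · injection hz with h1 h2; exact Or.inl (h1.symm ▸ h)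
  · rintro (h | h)
    · exact Or.inr ⟨γ, rfl, h⟩
    · exact Or.inl h

lemma hasArch_append {U V γ : PF} :
    Emb (U ++ V) (PF.node γ PF.nil) ↔ Emb U (PF.node γ PF.nil) ∨ Emb V (PF.node γ PF.nil) := by
  constructor
  · intro h
    obtain ⟨s₁, s₂, hs, h1, h2⟩ := emb_append_split U V _ h
    rcases append_eq_single hs.symm with ⟨rfl, rfl⟩ | ⟨rfl, rfl⟩
    · exact Or.inr h2
    · exact Or.inl h1
  · rintro (h | h)
    · exact emb_right_pad V h
    · exact emb_left_pad U h

lemma hasArch_node {γ c r : PF} :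
    Emb (PF.node c r) (PF.node γ PF.nil) ↔ bit γ c ∨ Emb r (PF.node γ PF.nil) := by
  constructor
  · intro h
    rcases emb_node_inv h with h | ⟨z, Z', hz, h1, h2⟩
    · rcases hasArch_append.mp h with h | h
      · exact Or.inl (Or.inr h)
      · exact Or.inr h
    · injection hz with e1 e2; subst e1; subst e2
      exact Or.inl (Or.inl h1)
  · rintro ((h | h) | h)
    · exact .keep h (emb_nil_right r)
    · exact .skip (emb_right_pad r h)
    · exact .skip (emb_left_pad c h)

lemma hasArch_rev {γ : PF} : ∀ X : PF, (Emb (rev X) (PF.node γ PF.nil) ↔ Emb X (PF.node γ PF.nil)) := by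
  intro X
  induction X with
  | nil => simp [rev]
  | node c r ihc ihr =>
    rw [rev_node, hasArch_append, hasArch_single, hasArch_node, ihr, or_comm]

/-- pair pattern `node x (node y nil)` = `⟨x⟩ ++ ⟨y⟩` embedding into a concatenation -/
lemma emb_pair_append {U V x y : PF} :
    Emb (U ++ V) (PF.node x (PF.node y PF.nil)) ↔
      Emb U (PF.node x (PF.node y PF.nil)) ∨ Emb V (PF.node x (PF.node y PF.nil)) ∨
      (Emb U (PF.node x PF.nil) ∧ Emb V (PF.node y PF.nil)) := by
  constructor
  · intro h
    obtain ⟨s₁, s₂, hs, h1, h2⟩ := emb_append_split U V _ h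
    rcases append_eq_pair hs.symm with ⟨rfl, rfl⟩ | ⟨rfl, rfl⟩ | ⟨rfl, rfl⟩
    · exact Or.inr (Or.inl h2)
    · exact Or.inr (Or.inr ⟨h1, h2⟩)
    · exact Or.inl h1
  · rintro (h | h | ⟨h1, h2⟩)
    · exact emb_right_pad V h
    · exact emb_left_pad U h
    · exact emb_append_mono h1 h2

lemma emb_pair_single {d x y : PF} :
    Emb (PF.node d PF.nil) (PF.node x (PF.node y PF.nil)) ↔
      Emb d (PF.node x (PF.node y PF.nil)) := by
  rw [emb_single_iff]
  constructor
  · rintro (h | ⟨z, hz, h⟩)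
    · exact h
    · simp at hz
  · exact Or.inl

lemma emb_pair_node {c r x y : PF} :
    Emb (PF.node c r) (PF.node x (PF.node y PF.nil)) ↔
      Emb c (PF.node x (PF.node y PF.nil)) ∨ Emb r (PF.node x (PF.node y PF.nil)) ∨
      (bit x c ∧ Emb r (PF.node y PF.nil)) := by
  constructor
  · intro h
    rcases emb_node_inv h with h | ⟨z, Z', hz, h1, h2⟩
    · rcases emb_pair_append.mp h with h | h | ⟨h1, h2⟩
      · exact Or.inl h
      · exact Or.inr (Or.inl h)
      · exact Or.inr (Or.inr ⟨Or.inr h1, h2⟩)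
    · injection hz with e1 e2; subst e1; subst e2
      exact Or.inr (Or.inr ⟨Or.inl h1, h2⟩)
  · rintro (h | h | ⟨(h1 | h1), h2⟩)
    · exact .skip (emb_right_pad r h)
    · exact .skip (emb_left_pad c h)
    · exact .keep h1 h2
    · exact .skip (emb_pair_append.mpr (Or.inr (Or.inr ⟨h1, h2⟩)))

/-- letter-view of a forest: `node c r = ⟨c⟩ ++ r` -/
lemma node_eq_single_append (c r : PF) : PF.node c r = PF.node c PF.nil ++ r := rfl

lemma emb_node_split_iff {c r s : PF} :
    Emb (PF.node c r) s ↔ ∃ s₁ s₂, s = s₁ ++ s₂ ∧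
      (Emb c s₁ ∨ ∃ z, s₁ = PF.node z PF.nil ∧ Emb c z) ∧ Emb r s₂ := by
  constructor
  · intro h
    rw [node_eq_single_append] at h
    obtain ⟨s₁, s₂, rfl, h1, h2⟩ := emb_append_split _ r _ h
    exact ⟨s₁, s₂, rfl, emb_single_iff.mp h1, h2⟩
  · rintro ⟨s₁, s₂, rfl, h1, h2⟩
    rw [node_eq_single_append]
    exact emb_append_mono (emb_single_iff.mpr h1) h2

/-! ### Contains helpers -/

lemma contains_trans {X Y Z : PF} (h1 : PF.Contains X Y) (h2 : PF.Contains Y Z) :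
    PF.Contains X Z := h1.trans h2

lemma contains_append_left (U V : PF) : PF.Contains (U ++ V) U :=
  contains_of_emb (emb_right_pad V (Emb.refl U))

lemma contains_append_right (U V : PF) : PF.Contains (U ++ V) V :=
  contains_of_emb (emb_left_pad U (Emb.refl V))

lemma contains_contents (z Z : PF) : PF.Contains (PF.node z Z) z :=
  (Relation.ReflTransGen.single (Del.root z Z)).trans (contains_append_left z Z)

lemma contains_node_nil (π R : PF) : PF.Contains (PF.node π R) (PF.node π PF.nil) :=
  contains_rest π (contains_of_emb (emb_nil_right R))

lemma contains_node_rest (π R : PF) : PF.Contains (PF.node π R) R :=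
  (Relation.ReflTransGen.single (Del.root π R)).trans (contains_append_right π R)

lemma emb_trans_contains {X s s' : PF} (h1 : Emb X s) (h2 : PF.Contains s s') : Emb X s' :=
  emb_trans h1 (emb_of_contains h2)

end PFW

namespace PFW
open PF

/-! ### The base bijection (pattern `⟨α⟩⟨β⟩` vs `⟨β⟩⟨α⟩`) -/

open Classical in
/-- letterwise transform -/
noncomputable def bf (α β : PF) : PF → PF
  | .nil => .nil
  | .node c r =>
    .node (if Emb c (.node α .nil) ∧ Emb c (.node β .nil) then rev (bf α β c) else bf α β c)
      (bf α β r)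

open Classical in
/-- the base bijection -/
noncomputable def bpsi (α β : PF) (X : PF) : PF :=
  if Emb X (.node α .nil) ∧ Emb X (.node β .nil) then rev (bf α β X) else bf α β X

lemma bf_nil (α β : PF) : bf α β .nil = .nil := rfl

lemma bf_node (α β c r : PF) : bf α β (.node c r) = .node (bpsi α β c) (bf α β r) := rfl

lemma bpsi_nil (α β : PF) : bpsi α β .nil = .nil := by
  rw [bpsi, if_neg, bf_nil]
  rintro ⟨h, -⟩
  exact PF.noConfusion (emb_nil_left h)

lemma size_bf (α β : PF) : ∀ X, (bf α β X).size = X.size := by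
  intro X
  induction X with
  | nil => rfl
  | node c r ihc ihr =>
    rw [bf_node]
    simp only [PF.size, ihr, bpsi]
    split
    · rw [size_rev, ihc]
    · rw [ihc]

lemma size_bpsi (α β : PF) (X : PF) : (bpsi α β X).size = X.size := by
  rw [bpsi]; split
  · rw [size_rev, size_bf]
  · rw [size_bf]

lemma tlen_bf (α β : PF) : ∀ X, tlen (bf α β X) = tlen X := by
  intro X
  induction X with
  | nil => rfl
  | node c r ihc ihr => rw [bf_node]; simp only [tlen_node, ihr]

lemma tlen_bpsi (α β : PF) (X : PF) : tlen (bpsi α β X) = tlen X := by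
  rw [bpsi]; split
  · rw [tlen_rev, tlen_bf]
  · rw [tlen_bf]

lemma bf_append (α β : PF) : ∀ U V, bf α β (U ++ V) = bf α β U ++ bf α β V := by
  intro U V
  induction U with
  | nil => rfl
  | node c u ihc ihu =>
    simp only [node_append, bf_node, ihu]

lemma bf_rev (α β : PF) : ∀ X, bf α β (rev X) = rev (bf α β X) := by
  intro X
  induction X with
  | nil => rfl
  | node c r ihc ihr =>
    simp only [rev_node, bf_append, ihr, bf_node, bf_nil]

/-- class of patterns below one of the two atoms -/
def Scl (α β s : PF) : Prop :=
  PF.Contains (PF.node α PF.nil) s ∨ PF.Contains (PF.node β PF.nil) s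

lemma Scl_down {α β s s' : PF} (h : Scl α β s) (h' : PF.Contains s s') : Scl α β s' :=
  h.imp (fun g => g.trans h') (fun g => g.trans h')

lemma Scl_a (α β : PF) : Scl α β (PF.node α PF.nil) := Or.inl .refl
lemma Scl_b (α β : PF) : Scl α β (PF.node β PF.nil) := Or.inr .refl
lemma Scl_alpha (α β : PF) : Scl α β α := Or.inl (contains_contents α PF.nil)
lemma Scl_beta (α β : PF) : Scl α β β := Or.inr (contains_contents β PF.nil)

abbrev BaseP (α β X : PF) : Prop :=
  ¬ Emb X (PF.node α (PF.node β PF.nil)) →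
    ((∀ s, Scl α β s → (Emb X s ↔ Emb (bf α β X) s))
    ∧ (∀ s, Scl α β s → (Emb X s ↔ Emb (bpsi α β X) s))
    ∧ ((¬ Emb X (PF.node α PF.nil) ∨ ¬ Emb X (PF.node β PF.nil)) →
        ¬ Emb (bf α β X) (PF.node β (PF.node α PF.nil)))
    ∧ (¬ Emb (rev (bf α β X)) (PF.node β (PF.node α PF.nil)))
    ∧ (¬ Emb (bpsi α β X) (PF.node β (PF.node α PF.nil)))
    ∧ (bf β α (bf α β X) = X)
    ∧ (bpsi β α (bpsi α β X) = X))

theorem base_main (α β : PF) : ∀ X : PF, BaseP α β X := by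
  apply size_induction (motive := BaseP α β)
  intro X ih hX
  cases X with
  | nil =>
    have hnBA : ¬ Emb PF.nil (PF.node β (PF.node α PF.nil)) := fun h =>
      PF.noConfusion (emb_nil_left h)
    refine ⟨fun s _ => Iff.rfl, fun s _ => ?_, fun _ => hnBA, ?_, ?_, rfl, ?_⟩
    · rw [bpsi_nil]
    · simpa [bf_nil] using hnBA
    · rw [bpsi_nil]; exact hnBA
    · rw [bpsi_nil, bpsi_nil]
  | node c r =>
    have hsc : c.size < (PF.node c r).size := by simp only [PF.size]; omega
    have hsr : r.size < (PF.node c r).size := by simp only [PF.size]; omega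
    have hc : ¬ Emb c (PF.node α (PF.node β PF.nil)) := fun h =>
      hX (emb_pair_node.mpr (Or.inl h))
    have hr : ¬ Emb r (PF.node α (PF.node β PF.nil)) := fun h =>
      hX (emb_pair_node.mpr (Or.inr (Or.inl h)))
    have hcr : ¬ (bit α c ∧ Emb r (PF.node β PF.nil)) := fun h =>
      hX (emb_pair_node.mpr (Or.inr (Or.inr h)))
    obtain ⟨C10c, C4c, C7c, C6c, C1c, C8c, C5c⟩ := ih c hsc hc
    obtain ⟨C10r, C4r, C7r, C6r, C1r, C8r, C5r⟩ := ih r hsr hr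
    -- C10 at X
    have C10 : ∀ s, Scl α β s → (Emb (PF.node c r) s ↔ Emb (bf α β (PF.node c r)) s) := by
      intro s hs
      rw [bf_node, emb_node_split_iff, emb_node_split_iff]
      constructor
      · rintro ⟨s₁, s₂, rfl, h1, h2⟩
        have hs₁ : Scl α β s₁ := Scl_down hs (contains_append_left _ _)
        have hs₂ : Scl α β s₂ := Scl_down hs (contains_append_right _ _)
        refine ⟨s₁, s₂, rfl, ?_, (C10r s₂ hs₂).mp h2⟩
        rcases h1 with h1 | ⟨z, rfl, h1⟩
        · exact Or.inl ((C4c s₁ hs₁).mp h1)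
        · exact Or.inr ⟨z, rfl, (C4c z (Scl_down hs₁ (contains_contents z PF.nil))).mp h1⟩
      · rintro ⟨s₁, s₂, rfl, h1, h2⟩
        have hs₁ : Scl α β s₁ := Scl_down hs (contains_append_left _ _)
        have hs₂ : Scl α β s₂ := Scl_down hs (contains_append_right _ _)
        refine ⟨s₁, s₂, rfl, ?_, (C10r s₂ hs₂).mpr h2⟩
        rcases h1 with h1 | ⟨z, rfl, h1⟩
        · exact Or.inl ((C4c s₁ hs₁).mpr h1)
        · exact Or.inr ⟨z, rfl, (C4c z (Scl_down hs₁ (contains_contents z PF.nil))).mpr h1⟩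
    -- C4 at X
    have C4 : ∀ s, Scl α β s → (Emb (PF.node c r) s ↔ Emb (bpsi α β (PF.node c r)) s) := by
      intro s hs
      rw [bpsi]
      split
      · rename_i hboth
        have hXa : Emb (PF.node c r) (PF.node α PF.nil) := hboth.1
        have hXb : Emb (PF.node c r) (PF.node β PF.nil) := hboth.2
        have hYa : Emb (rev (bf α β (PF.node c r))) (PF.node α PF.nil) := by
          rw [hasArch_rev]
          exact (C10 _ (Scl_a α β)).mp hXa
        have hYb : Emb (rev (bf α β (PF.node c r))) (PF.node β PF.nil) := by
          rw [hasArch_rev]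
          exact (C10 _ (Scl_b α β)).mp hXb
        rcases hs with hs | hs
        · exact iff_of_true (emb_trans_contains hXa hs) (emb_trans_contains hYa hs)
        · exact iff_of_true (emb_trans_contains hXb hs) (emb_trans_contains hYb hs)
      · exact C10 s hs
    -- C7 at X
    have C7 : (¬ Emb (PF.node c r) (PF.node α PF.nil) ∨ ¬ Emb (PF.node c r) (PF.node β PF.nil)) →
        ¬ Emb (bf α β (PF.node c r)) (PF.node β (PF.node α PF.nil)) := by
      intro hone h
      rw [bf_node] at h
      rcases emb_pair_node.mp h with h | h | ⟨h1, h2⟩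
      · exact C1c h
      · refine C7r ?_ h
        rcases hone with hone | hone
        · exact Or.inl (fun g => hone (hasArch_node.mpr (Or.inr g)))
        · exact Or.inr (fun g => hone (hasArch_node.mpr (Or.inr g)))
      · -- h1 : bit β (bpsi α β c), h2 : Emb (bf α β r) (node α nil)
        have h1' : bit β c := by
          rcases h1 with h1 | h1
          · exact Or.inl ((C4c β (Scl_beta α β)).mpr h1)
          · exact Or.inr ((C4c _ (Scl_b α β)).mpr h1)
        have h2' : Emb r (PF.node α PF.nil) := (C10r _ (Scl_a α β)).mpr h2
        rcases hone with hone | hone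
        · exact hone (hasArch_node.mpr (Or.inr h2'))
        · exact hone (hasArch_node.mpr (Or.inl h1'))
    -- C6 at X
    have C6 : ¬ Emb (rev (bf α β (PF.node c r))) (PF.node β (PF.node α PF.nil)) := by
      intro h
      rw [bf_node, rev_node] at h
      rcases emb_pair_append.mp h with h | h | ⟨h1, h2⟩
      · exact C6r h
      · exact C1c (emb_pair_single.mp h)
      · -- h1 : Emb (rev (bf α β r)) (node β nil), h2 : Emb (node (bpsi α β c) nil) (node α nil)
        have h1' : Emb r (PF.node β PF.nil) := by
          rw [hasArch_rev] at h1
          exact (C10r _ (Scl_b α β)).mpr h1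
        have h2' : bit α c := by
          rcases hasArch_single.mp h2 with h2 | h2
          · exact Or.inl ((C4c α (Scl_alpha α β)).mpr h2)
          · exact Or.inr ((C4c _ (Scl_a α β)).mpr h2)
        exact hcr ⟨h2', h1'⟩
    -- C1 at X
    have C1 : ¬ Emb (bpsi α β (PF.node c r)) (PF.node β (PF.node α PF.nil)) := by
      rw [bpsi]
      split
      · exact C6
      · rename_i hboth
        exact C7 (not_and_or.mp hboth)
    -- C8 at X
    have C8 : bf β α (bf α β (PF.node c r)) = PF.node c r := by
      rw [bf_node, bf_node, C5c, C8r]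
    -- C5 at X
    have C5 : bpsi β α (bpsi α β (PF.node c r)) = PF.node c r := by
      by_cases hboth : Emb (PF.node c r) (PF.node α PF.nil) ∧ Emb (PF.node c r) (PF.node β PF.nil)
      · have e1 : bpsi α β (PF.node c r) = rev (bf α β (PF.node c r)) := by
          rw [bpsi, if_pos hboth]
        have hYa : Emb (rev (bf α β (PF.node c r))) (PF.node α PF.nil) := by
          rw [hasArch_rev]; exact (C10 _ (Scl_a α β)).mp hboth.1
        have hYb : Emb (rev (bf α β (PF.node c r))) (PF.node β PF.nil) := by
          rw [hasArch_rev]; exact (C10 _ (Scl_b α β)).mp hboth.2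
        rw [e1, bpsi, if_pos ⟨hYb, hYa⟩, bf_rev, rev_rev, C8]
      · have e1 : bpsi α β (PF.node c r) = bf α β (PF.node c r) := by
          rw [bpsi, if_neg hboth]
        have hYcond : ¬ (Emb (bf α β (PF.node c r)) (PF.node β PF.nil) ∧
            Emb (bf α β (PF.node c r)) (PF.node α PF.nil)) := by
          rintro ⟨g1, g2⟩
          exact hboth ⟨(C10 _ (Scl_a α β)).mpr g2, (C10 _ (Scl_b α β)).mpr g1⟩
        rw [e1, bpsi, if_neg hYcond, C8]
    exact ⟨C10, C4, C7, C6, C1, C8, C5⟩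

end PFW

namespace PFW
open PF

/-! ### Mirror -/

def mir : PF → PF
  | .nil => .nil
  | .node c r => mir r ++ PF.node (mir c) PF.nil

@[simp] lemma mir_nil : mir PF.nil = PF.nil := rfl
lemma mir_node (c r : PF) : mir (PF.node c r) = mir r ++ PF.node (mir c) PF.nil := rfl

lemma mir_single (c : PF) : mir (PF.node c PF.nil) = PF.node (mir c) PF.nil := by
  rw [mir_node, mir_nil, nil_append]

@[simp] lemma size_mir (X : PF) : (mir X).size = X.size := by
  induction X with
  | nil => rfl
  | node c r ihc ihr =>
    simp only [mir_node, size_append, PF.size, ihc, ihr]; omega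

@[simp] lemma tlen_mir (X : PF) : tlen (mir X) = tlen X := by
  induction X with
  | nil => rfl
  | node c r ihc ihr => simp only [mir_node, tlen_append, tlen_node, tlen_nil, ihr]

lemma mir_append (U V : PF) : mir (U ++ V) = mir V ++ mir U := by
  induction U with
  | nil => simp
  | node c u ihc ihu => simp only [node_append, mir_node, ihu, append_assoc]

@[simp] lemma mir_mir (X : PF) : mir (mir X) = X := by
  induction X with
  | nil => rfl
  | node c r ihc ihr =>
    rw [mir_node, mir_append, mir_single, ihc, ihr]
    rfl

lemma emb_mir {X A : PF} (h : Emb X A) : Emb (mir X) (mir A) := by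
  induction h with
  | nil => exact .nil
  | @skip c r A h ih =>
    rw [mir_append] at ih
    rw [mir_node]
    have pad : Emb (PF.node (mir c) PF.nil) (mir c) := .skip (by rw [append_nil]; exact Emb.refl _)
    exact emb_trans (emb_append_mono (Emb.refl (mir r)) pad) ih
  | @keep c r z Z h1 h2 ih1 ih2 =>
    rw [mir_node, mir_node]
    exact emb_append_mono ih2 (.keep ih1 .nil)

lemma emb_mir_iff {X A : PF} : Emb (mir X) (mir A) ↔ Emb X A :=
  ⟨fun h => by simpa using emb_mir h, emb_mir⟩

/-! ### Peeling: first-certificate extraction and substitution -/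

/-- take the first `k` top-level trees -/
def takeT : ℕ → PF → PF
  | 0, _ => .nil
  | _ + 1, .nil => .nil
  | k + 1, .node c r => .node c (takeT k r)

/-- drop the first `k` top-level trees -/
def dropT : ℕ → PF → PF
  | 0, X => X
  | _ + 1, .nil => .nil
  | k + 1, .node _ r => dropT k r

lemma takeT_append_dropT : ∀ (k : ℕ) (X : PF), takeT k X ++ dropT k X = X := by
  intro k
  induction k with
  | zero => intro X; rfl
  | succ k ih =>
    intro X
    cases X with
    | nil => rfl
    | node c r => simp only [takeT, dropT, node_append, ih]

lemma takeT_exact : ∀ (U V : PF), takeT (tlen U) (U ++ V) = U := by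
  intro U
  induction U with
  | nil => intro V; rfl
  | node c u ihc ihu => intro V; simp only [tlen_node, node_append, takeT, append_eq, ihu]

lemma dropT_exact : ∀ (U V : PF), dropT (tlen U) (U ++ V) = V := by
  intro U
  induction U with
  | nil => intro V; rfl
  | node c u ihc ihu => intro V; simp only [tlen_node, node_append, dropT, append_eq, ihu]

lemma tlen_takeT : ∀ (k : ℕ) (X : PF), k ≤ tlen X → tlen (takeT k X) = k := by
  intro k
  induction k with
  | zero => intro X _; rfl
  | succ k ih =>
    intro X hk
    cases X with
    | nil => simp at hk
    | node c r =>
      simp only [takeT, tlen_node]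
      rw [ih r (by simpa using hk)]

lemma size_takeT_add_dropT (k : ℕ) (X : PF) :
    (takeT k X).size + (dropT k X).size = X.size := by
  conv_rhs => rw [← takeT_append_dropT k X]
  rw [size_append]

lemma tlen_dropT : ∀ (k : ℕ) (X : PF), tlen (dropT k X) = tlen X - k := by
  intro k
  induction k with
  | zero => intro X; simp [dropT]
  | succ k ih =>
    intro X
    cases X with
    | nil => simp [dropT]
    | node c r => simp only [dropT, tlen_node, ih]; omega

section Peel

variable (π : PF)

/-- `X` contains the atom `⟨π⟩` -/
def hasC (X : PF) : Prop := Emb X (PF.node π PF.nil)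

open Classical in
/-- the forest to the right of the first (postorder) certificate of `⟨π⟩` -/
noncomputable def ext : PF → PF
  | .nil => .nil
  | .node c r =>
    if hasC π c then ext c ++ r else if Emb c π then r else ext r

open Classical in
/-- substitute the part to the right of the first certificate -/
noncomputable def sb : PF → PF → PF
  | .nil, _ => .nil
  | .node c r, Y =>
    if hasC π c then
      PF.node (sb c (takeT (tlen Y - tlen r) Y)) (dropT (tlen Y - tlen r) Y)
    else if Emb c π then PF.node c Y else PF.node c (sb r Y)

lemma hasC_nil : ¬ hasC π PF.nil := fun h => PF.noConfusion (emb_nil_left h)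

lemma hasC_node {c r : PF} : hasC π (PF.node c r) ↔ (Emb c π ∨ hasC π c) ∨ hasC π r :=
  hasArch_node

/-- L1 : no certificate in `c` means the pattern must embed to the right -/
lemma emb_drop_left : ∀ c : PF, ∀ (Z R : PF), ¬ hasC π c →
    Emb (c ++ Z) (PF.node π R) → Emb Z (PF.node π R) := by
  apply size_induction
  intro c ih Z R hnc h
  cases c with
  | nil => exact h
  | node c₁ c₂ =>
    simp only [node_append] at h
    cases h with
    | skip h' =>
      rw [← append_assoc] at h'
      refine ih (c₁ ++ c₂) (size_append_lt c₁ c₂) Z R ?_ h'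
      intro hcc
      exact hnc (hasC_node π |>.mpr (by
        rcases hasArch_append.mp hcc with h | h
        · exact Or.inl (Or.inr h)
        · exact Or.inr h))
    | keep h1 h2 =>
      exact absurd (hasC_node π |>.mpr (Or.inl (Or.inl h1))) hnc

/-- (FC') the fundamental reduction -/
lemma ext_spec : ∀ X : PF, hasC π X → ∀ (W R : PF),
    (Emb (X ++ W) (PF.node π R) ↔ Emb (ext π X ++ W) R) := by
  apply size_induction
  intro X ih hX W R
  cases X with
  | nil => exact absurd hX (hasC_nil π)
  | node c r =>
    by_cases hc : hasC π c
    · -- ext = ext c ++ r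
      have hext : ext π (PF.node c r) = ext π c ++ r := by rw [ext, if_pos hc]
      have hihc := ih c (by simp only [PF.size]; omega) hc (r ++ W) R
      rw [hext]
      constructor
      · intro h
        simp only [node_append] at h
        rw [append_assoc]
        cases h with
        | skip h' => exact hihc.mp h'
        | keep h1 h2 => exact emb_left_pad _ h2
      · intro h
        rw [append_assoc] at h
        simp only [node_append]
        exact .skip (hihc.mpr h)
    · by_cases hπ : Emb c π
      · -- ext = r
        have he : ext π (PF.node c r) = r := by rw [ext, if_neg hc, if_pos hπ]
        rw [he]
        constructor
        · intro h
          simp only [node_append] at h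
          cases h with
          | skip h' =>
            have h2 := emb_drop_left π c (r ++ W) R hc h'
            exact emb_trans h2 (emb_of_contains (contains_node_rest π R))
          | keep h1 h2 => exact h2
        · intro h
          simp only [node_append]
          exact .keep hπ h
      · -- ext = ext r
        have hrr : hasC π r := by
          rcases (hasC_node π).mp hX with (h | h) | h
          · exact absurd h hπ
          · exact absurd h hc
          · exact h
        have he : ext π (PF.node c r) = ext π r := by rw [ext, if_neg hc, if_neg hπ]
        rw [he, ← ih r (by simp only [PF.size]; omega) hrr W R]
        constructor
        · intro h
          simp only [node_append] at h
          cases h with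
          | skip h' => exact emb_drop_left π c (r ++ W) R hc h'
          | keep h1 h2 => exact absurd h1 hπ
        · intro h
          simp only [node_append]
          exact .skip (emb_left_pad c h)

lemma ext_spec' {X : PF} (hX : hasC π X) (R : PF) :
    Emb X (PF.node π R) ↔ Emb (ext π X) R := by
  have := ext_spec π X hX PF.nil R
  rwa [append_nil, append_nil] at this

lemma not_emb_of_not_hasC {X R : PF} (hX : ¬ hasC π X) : ¬ Emb X (PF.node π R) := fun h =>
  hX (emb_trans h (emb_of_contains (contains_node_nil π R)))

lemma tlen_ext_node_case1 {c r : PF} (hc : hasC π c) :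
    ext π (PF.node c r) = ext π c ++ r := by rw [ext, if_pos hc]

lemma hasC_sb : ∀ X : PF, hasC π X → ∀ Y, hasC π (sb π X Y) := by
  apply size_induction
  intro X ih hX Y
  cases X with
  | nil => exact absurd hX (hasC_nil π)
  | node c r =>
    by_cases hc : hasC π c
    · rw [sb, if_pos hc]
      exact (hasC_node π).mpr (Or.inl (Or.inr
        (ih c (by simp only [PF.size]; omega) hc _)))
    · by_cases hπ : Emb c π
      · rw [sb, if_neg hc, if_pos hπ]
        exact (hasC_node π).mpr (Or.inl (Or.inl hπ))
      · have hrr : hasC π r := by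
          rcases (hasC_node π).mp hX with (h | h) | h
          · exact absurd h hπ
          · exact absurd h hc
          · exact h
        rw [sb, if_neg hc, if_neg hπ]
        exact (hasC_node π).mpr (Or.inr (ih r (by simp only [PF.size]; omega) hrr Y))

lemma ext_sb : ∀ X : PF, hasC π X → ∀ Y, tlen Y = tlen (ext π X) →
    ext π (sb π X Y) = Y := by
  apply size_induction
  intro X ih hX Y hY
  cases X with
  | nil => exact absurd hX (hasC_nil π)
  | node c r =>
    by_cases hc : hasC π c
    · rw [tlen_ext_node_case1 π hc, tlen_append] at hY
      have hk : tlen Y - tlen r = tlen (ext π c) := by omega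
      rw [sb, if_pos hc, ext, if_pos (hasC_sb π c hc _)]
      have ht : tlen (takeT (tlen Y - tlen r) Y) = tlen (ext π c) := by
        rw [tlen_takeT _ _ (by omega), hk]
      rw [ih c (by simp only [PF.size]; omega) hc _ ht, takeT_append_dropT]
    · by_cases hπ : Emb c π
      · rw [sb, if_neg hc, if_pos hπ, ext, if_neg hc, if_pos hπ]
      · have hrr : hasC π r := by
          rcases (hasC_node π).mp hX with (h | h) | h
          · exact absurd h hπ
          · exact absurd h hc
          · exact h
        have he : ext π (PF.node c r) = ext π r := by rw [ext, if_neg hc, if_neg hπ]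
        rw [he] at hY
        rw [sb, if_neg hc, if_neg hπ, ext, if_neg hc, if_neg hπ]
        exact ih r (by simp only [PF.size]; omega) hrr Y hY

lemma sb_ext : ∀ X : PF, hasC π X → sb π X (ext π X) = X := by
  apply size_induction
  intro X ih hX
  cases X with
  | nil => exact absurd hX (hasC_nil π)
  | node c r =>
    by_cases hc : hasC π c
    · rw [sb, if_pos hc, tlen_ext_node_case1 π hc]
      have hk : tlen (ext π c ++ r) - tlen r = tlen (ext π c) := by
        rw [tlen_append]; omega
      rw [hk, takeT_exact, dropT_exact, ih c (by simp only [PF.size]; omega) hc]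
    · by_cases hπ : Emb c π
      · rw [sb, if_neg hc, if_pos hπ, ext, if_neg hc, if_pos hπ]
      · have hrr : hasC π r := by
          rcases (hasC_node π).mp hX with (h | h) | h
          · exact absurd h hπ
          · exact absurd h hc
          · exact h
        have he : ext π (PF.node c r) = ext π r := by rw [ext, if_neg hc, if_neg hπ]
        rw [sb, if_neg hc, if_neg hπ, he, ih r (by simp only [PF.size]; omega) hrr]

lemma size_sb : ∀ X : PF, hasC π X → ∀ Y, tlen Y = tlen (ext π X) →
    (sb π X Y).size + (ext π X).size = X.size + Y.size := by
  apply size_induction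
  intro X ih hX Y hY
  cases X with
  | nil => exact absurd hX (hasC_nil π)
  | node c r =>
    by_cases hc : hasC π c
    · rw [tlen_ext_node_case1 π hc, tlen_append] at hY
      rw [sb, if_pos hc, tlen_ext_node_case1 π hc]
      have ht : tlen (takeT (tlen Y - tlen r) Y) = tlen (ext π c) := by
        rw [tlen_takeT _ _ (by omega)]; omega
      have := ih c (by simp only [PF.size]; omega) hc _ ht
      have hsz := size_takeT_add_dropT (tlen Y - tlen r) Y
      simp only [PF.size, size_append] at *
      omega
    · by_cases hπ : Emb c π
      · rw [sb, if_neg hc, if_pos hπ]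
        have he : ext π (PF.node c r) = r := by rw [ext, if_neg hc, if_pos hπ]
        rw [he]
        simp only [PF.size]; omega
      · have hrr : hasC π r := by
          rcases (hasC_node π).mp hX with (h | h) | h
          · exact absurd h hπ
          · exact absurd h hc
          · exact h
        have he : ext π (PF.node c r) = ext π r := by rw [ext, if_neg hc, if_neg hπ]
        rw [he] at hY ⊢
        rw [sb, if_neg hc, if_neg hπ]
        have := ih r (by simp only [PF.size]; omega) hrr Y hY
        simp only [PF.size]; omega

lemma tlen_sb : ∀ X : PF, hasC π X → ∀ Y, tlen Y = tlen (ext π X) →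
    tlen (sb π X Y) = tlen X := by
  apply size_induction
  intro X ih hX Y hY
  cases X with
  | nil => exact absurd hX (hasC_nil π)
  | node c r =>
    by_cases hc : hasC π c
    · rw [tlen_ext_node_case1 π hc, tlen_append] at hY
      rw [sb, if_pos hc]
      simp only [tlen_node, tlen_dropT]
      omega
    · by_cases hπ : Emb c π
      · rw [sb, if_neg hc, if_pos hπ]
        have he : ext π (PF.node c r) = r := by rw [ext, if_neg hc, if_pos hπ]
        rw [he] at hY
        simp only [tlen_node, hY]
      · have hrr : hasC π r := by
          rcases (hasC_node π).mp hX with (h | h) | h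
          · exact absurd h hπ
          · exact absurd h hc
          · exact h
        have he : ext π (PF.node c r) = ext π r := by rw [ext, if_neg hc, if_neg hπ]
        rw [he] at hY
        rw [sb, if_neg hc, if_neg hπ]
        simp only [tlen_node, ih r (by simp only [PF.size]; omega) hrr Y hY]

lemma sb_sb : ∀ X : PF, hasC π X → ∀ Y Y', tlen Y = tlen (ext π X) →
    sb π (sb π X Y) Y' = sb π X Y' := by
  apply size_induction
  intro X ih hX Y Y' hY
  cases X with
  | nil => exact absurd hX (hasC_nil π)
  | node c r =>
    by_cases hc : hasC π c
    · rw [tlen_ext_node_case1 π hc, tlen_append] at hY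
      have ht : tlen (takeT (tlen Y - tlen r) Y) = tlen (ext π c) := by
        rw [tlen_takeT _ _ (by omega)]; omega
      rw [sb, if_pos hc, sb, if_pos (hasC_sb π c hc _)]
      have hd : tlen (dropT (tlen Y - tlen r) Y) = tlen r := by
        rw [tlen_dropT]; omega
      rw [hd, ih c (by simp only [PF.size]; omega) hc _ (takeT (tlen Y' - tlen r) Y') ht]
      rw [sb, if_pos hc]
    · by_cases hπ : Emb c π
      · rw [sb, if_neg hc, if_pos hπ, sb, if_neg hc, if_pos hπ, sb, if_neg hc, if_pos hπ]
      · have hrr : hasC π r := by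
          rcases (hasC_node π).mp hX with (h | h) | h
          · exact absurd h hπ
          · exact absurd h hc
          · exact h
        have he : ext π (PF.node c r) = ext π r := by rw [ext, if_neg hc, if_neg hπ]
        rw [he] at hY
        rw [sb, if_neg hc, if_neg hπ, sb, if_neg hc, if_neg hπ, sb, if_neg hc, if_neg hπ,
          ih r (by simp only [PF.size]; omega) hrr Y Y' hY]

end Peel

end PFW

namespace PFW
open PF

/-! ### Transfer data and assembly -/

/-- existence of a size- and width-preserving bijection between avoider classes -/
def TransferData (A B : PF) : Prop :=
  ∃ f g : PF → PF,
    (∀ X, ¬ Emb X A →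
      ¬ Emb (f X) B ∧ (f X).size = X.size ∧ tlen (f X) = tlen X ∧ g (f X) = X) ∧
    (∀ Y, ¬ Emb Y B →
      ¬ Emb (g Y) A ∧ (g Y).size = Y.size ∧ tlen (g Y) = tlen Y ∧ f (g Y) = Y)

lemma base_td (α β : PF) :
    TransferData (PF.node α (PF.node β PF.nil)) (PF.node β (PF.node α PF.nil)) := by
  refine ⟨bpsi α β, bpsi β α, fun X hX => ?_, fun Y hY => ?_⟩
  · obtain ⟨-, -, -, -, C1, -, C5⟩ := base_main α β X hX
    exact ⟨C1, size_bpsi α β X, tlen_bpsi α β X, C5⟩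
  · obtain ⟨-, -, -, -, C1, -, C5⟩ := base_main β α Y hY
    exact ⟨C1, size_bpsi β α Y, tlen_bpsi β α Y, C5⟩

open Classical in
noncomputable def peelF (π : PF) (f : PF → PF) (X : PF) : PF :=
  if hasC π X then sb π X (f (ext π X)) else X

lemma peel_side (π R R' : PF) (f g : PF → PF)
    (hf : ∀ X, ¬ Emb X R →
      ¬ Emb (f X) R' ∧ (f X).size = X.size ∧ tlen (f X) = tlen X ∧ g (f X) = X) :
    ∀ X, ¬ Emb X (PF.node π R) →
      ¬ Emb (peelF π f X) (PF.node π R') ∧ (peelF π f X).size = X.size ∧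
        tlen (peelF π f X) = tlen X ∧ peelF π g (peelF π f X) = X := by
  intro X hAv
  by_cases hX : hasC π X
  · have hextAv : ¬ Emb (ext π X) R := fun h => hAv ((ext_spec' π hX R).mpr h)
    obtain ⟨h1, h2, h3, h4⟩ := hf (ext π X) hextAv
    have hF : peelF π f X = sb π X (f (ext π X)) := by rw [peelF, if_pos hX]
    have htl : tlen (f (ext π X)) = tlen (ext π X) := h3
    have hsX : hasC π (sb π X (f (ext π X))) := hasC_sb π X hX _
    have hext2 : ext π (sb π X (f (ext π X))) = f (ext π X) := ext_sb π X hX _ htl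
    refine ⟨?_, ?_, ?_, ?_⟩
    · rw [hF]
      intro h
      rw [ext_spec' π hsX R', hext2] at h
      exact h1 h
    · rw [hF]
      have := size_sb π X hX _ htl
      omega
    · rw [hF]; exact tlen_sb π X hX _ htl
    · rw [hF, peelF, if_pos hsX, hext2, h4, sb_sb π X hX _ _ htl, sb_ext π X hX]
  · have hF : peelF π f X = X := by rw [peelF, if_neg hX]
    refine ⟨?_, by rw [hF], by rw [hF], by rw [hF, peelF, if_neg hX]⟩
    rw [hF]
    exact not_emb_of_not_hasC π hX

lemma peel_td (π R R' : PF) (h : TransferData R R') :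
    TransferData (PF.node π R) (PF.node π R') := by
  obtain ⟨f, g, hf, hg⟩ := h
  exact ⟨peelF π f, peelF π g, peel_side π R R' f g hf, peel_side π R' R g f hg⟩

lemma mirror_td {A B : PF} (h : TransferData (mir A) (mir B)) : TransferData A B := by
  obtain ⟨f, g, hf, hg⟩ := h
  refine ⟨fun X => mir (f (mir X)), fun Y => mir (g (mir Y)), fun X hX => ?_, fun Y hY => ?_⟩
  · have hX' : ¬ Emb (mir X) (mir A) := fun h => hX (by simpa using emb_mir_iff.mpr h)
    obtain ⟨h1, h2, h3, h4⟩ := hf (mir X) hX'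
    refine ⟨fun h => h1 ?_, by simp [h2], by simp [h3], by simp [h4]⟩
    have := emb_mir h
    simpa using this
  · have hY' : ¬ Emb (mir Y) (mir B) := fun h => hY (by simpa using emb_mir_iff.mpr h)
    obtain ⟨h1, h2, h3, h4⟩ := hg (mir Y) hY'
    refine ⟨fun h => h1 ?_, by simp [h2], by simp [h3], by simp [h4]⟩
    have := emb_mir h
    simpa using this

theorem main_transfer : ∀ n P Q α β, 2 * tlen Q + tlen P ≤ n →
    TransferData (P ++ PF.node α PF.nil ++ PF.node β PF.nil ++ Q)
      (P ++ PF.node β PF.nil ++ PF.node α PF.nil ++ Q) := by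
  intro n
  induction n using Nat.strong_induction_on with
  | _ n ih =>
    intro P Q α β hm
    cases P with
    | node π P' =>
      have hlt : 2 * tlen Q + tlen P' < n := by
        simp only [tlen_node] at hm; omega
      have ht := ih _ hlt P' Q α β le_rfl
      simp only [node_append]
      exact peel_td π _ _ ht
    | nil =>
      cases Q with
      | nil =>
        simpa using base_td α β
      | node q Q' =>
        apply mirror_td
        have hq : tlen (PF.node q Q') ≥ 1 := by simp
        have hlt : 2 * tlen (PF.nil : PF) + tlen (mir (PF.node q Q')) < n := by
          simp only [tlen_mir, tlen_nil] at *
          simp only [tlen_node] at hm ⊢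
          omega
        have ht := ih _ hlt (mir (PF.node q Q')) PF.nil (mir β) (mir α) le_rfl
        have e1 : mir (PF.nil ++ PF.node α PF.nil ++ PF.node β PF.nil ++ PF.node q Q') =
            mir (PF.node q Q') ++ PF.node (mir β) PF.nil ++ PF.node (mir α) PF.nil ++ PF.nil := by
          simp [mir_node, mir_append, append_assoc]
        have e2 : mir (PF.nil ++ PF.node β PF.nil ++ PF.node α PF.nil ++ PF.node q Q') =
            mir (PF.node q Q') ++ PF.node (mir α) PF.nil ++ PF.node (mir β) PF.nil ++ PF.nil := by
          simp [mir_node, mir_append, append_assoc]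
        rw [e1, e2]
        exact ht

end PFW

open PFW PF in
private theorem wilfEq_comm_core (α β : PF) (P Q : PF) :
    PF.WilfEq (P ++ PF.node α PF.nil ++ PF.node β PF.nil ++ Q)
      (P ++ PF.node β PF.nil ++ PF.node α PF.nil ++ Q) := by
  intro n
  obtain ⟨f, g, hf, hg⟩ := PFW.main_transfer (2 * PFW.tlen Q + PFW.tlen P) P Q α β le_rfl
  have himg : f '' {X | X ∈ PF.Av (P ++ PF.node α PF.nil ++ PF.node β PF.nil ++ Q) ∧ X.size = n}
      = {X | X ∈ PF.Av (P ++ PF.node β PF.nil ++ PF.node α PF.nil ++ Q) ∧ X.size = n} := by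
    ext Y
    constructor
    · rintro ⟨X, ⟨hXA, hXn⟩, rfl⟩
      have hXA' : ¬ PFW.Emb X (P ++ PF.node α PF.nil ++ PF.node β PF.nil ++ Q) :=
        fun h => hXA (PFW.contains_of_emb h)
      obtain ⟨h1, h2, h3, h4⟩ := hf X hXA'
      exact ⟨fun hc => h1 (PFW.emb_of_contains hc), by rw [h2, hXn]⟩
    · rintro ⟨hYB, hYn⟩
      have hYB' : ¬ PFW.Emb Y (P ++ PF.node β PF.nil ++ PF.node α PF.nil ++ Q) :=
        fun h => hYB (PFW.contains_of_emb h)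
      obtain ⟨h1, h2, h3, h4⟩ := hg Y hYB'
      exact ⟨g Y, ⟨fun hc => h1 (PFW.emb_of_contains hc), by rw [h2, hYn]⟩, h4⟩
  have hinj : Set.InjOn f
      {X | X ∈ PF.Av (P ++ PF.node α PF.nil ++ PF.node β PF.nil ++ Q) ∧ X.size = n} := by
    rintro X1 ⟨h1, -⟩ X2 ⟨h2, -⟩ he
    have e1 := (hf X1 (fun h => h1 (PFW.contains_of_emb h))).2.2.2
    have e2 := (hf X2 (fun h => h2 (PFW.contains_of_emb h))).2.2.2
    rw [← e1, ← e2, he]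
  rw [← himg, Set.ncard_image_of_injOn hinj]

/-- For any atoms `a`, `b` and arch systems `P`, `Q`, the classes `Av(PabQ)` and
`Av(PbaQ)` are Wilf-equivalent. -/
theorem wilfEq_comm (a b : PF) (ha : a.IsAtom) (hb : b.IsAtom) (P Q : PF) :
    PF.WilfEq (P ++ a ++ b ++ Q) (P ++ b ++ a ++ Q) := by
  obtain ⟨α, rfl⟩ := ha
  obtain ⟨β, rfl⟩ := hb
  exact wilfEq_comm_core α β P Q
end
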